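/- arXiv:2007.04040 — 4 statements merged into one kernel-verified Lean document; each statement's English description precedes it below -/
import Mathlib

section
/- In the setting of the deterministic control ODE $f_w'(t) = (c_2^*(t) + c_3(t) f_w(t))^\top (w'(t) - \frac{1}{2} c_3(t))$, $f_w(0) = 0$, with $c_2^*, c_3$ piecewise continuous on $[0,T]$: define $\underline{x}^*(t) = \inf_w f_w(t)$ and $\bar{x}^*(t) = \sup_w f_w(t)$ over absolutely continuous $w$ with bounded derivative. Then $\underline{x}^*$ is non-increasing and $\bar{x}^*$ is non-decreasing in $t$, and both are left-continuous on $(0,T]$. -/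
open MeasureTheory
open scoped RealInnerProductSpace

def PiecewiseContinuousOn {E : Type*} [TopologicalSpace E] (f : ℝ → E) (a b : ℝ) : Prop :=
  ∃ (N : ℕ) (t : Fin (N + 1) → ℝ), StrictMono t ∧ t 0 = a ∧ t (Fin.last N) = b ∧
    ∀ i : Fin N, ContinuousOn f (Set.Ico (t i.castSucc) (t i.succ)) ∧
      ∃ L : E, Filter.Tendsto f (nhdsWithin (t i.succ) (Set.Iio (t i.succ))) (nhds L)

open Set Filter
open scoped Topology

lemma bdd_of_tendsto {E : Type*} [NormedAddCommGroup E] {g : ℝ → E} {a b : ℝ}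
    (hg : ContinuousOn g (Set.Ico a b)) {L : E}
    (hL : Filter.Tendsto g (𝓝[<] b) (𝓝 L)) : ∃ C, ∀ x ∈ Set.Ico a b, ‖g x‖ ≤ C := by
  rcases le_or_gt b a with h | h
  · exact ⟨0, fun x hx => absurd hx (by simp [Set.Ico_eq_empty (not_lt.2 h)])⟩
  · set G : ℝ → E := fun x => if x = b then L else g x with hGdef
    have hGIio : ∀ x ∈ Set.Iio b, G x = g x := fun x hx => if_neg (ne_of_lt hx)
    have hG : ContinuousOn G (Set.Icc a b) := by
      intro x hx
      rcases lt_or_eq_of_le hx.2 with hxb | rfl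
      · have h1 : ContinuousWithinAt g (Set.Icc a b) x := by
          apply (hg x ⟨hx.1, hxb⟩).mono_of_mem_nhdsWithin
          apply Filter.mem_of_superset (inter_mem_nhdsWithin _ (Iio_mem_nhds hxb))
          intro y hy; exact ⟨hy.1.1, hy.2⟩
        apply h1.congr_of_eventuallyEq
        · filter_upwards [nhdsWithin_le_nhds (Iio_mem_nhds hxb)] with y hy using hGIio y hy
        · exact hGIio x hxb
      · have hGb : G x = L := if_pos rfl
        unfold ContinuousWithinAt
        rw [hGb]
        have h1 : nhdsWithin x (Set.Icc a x) ≤ nhdsWithin x (Set.Iic x) :=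
          nhdsWithin_mono _ Set.Icc_subset_Iic_self
        refine Filter.Tendsto.mono_left ?_ h1
        rw [← Set.Iio_union_right, nhdsWithin_union]
        rw [Filter.tendsto_sup]
        constructor
        · refine hL.congr' ?_
          filter_upwards [self_mem_nhdsWithin] with y hy using (hGIio y hy).symm
        · rw [nhdsWithin_singleton]
          rw [← hGb]; exact tendsto_pure_nhds G x
    obtain ⟨C, hC⟩ := IsCompact.exists_bound_of_continuousOn isCompact_Icc hG
    refine ⟨C, fun x hx => ?_⟩
    rw [← hGIio x hx.2]
    exact hC x ⟨hx.1, hx.2.le⟩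

lemma pc_cover {N : ℕ} {t : Fin (N+1) → ℝ} (ht : StrictMono t) :
    Set.Ico (t 0) (t (Fin.last N)) ⊆ ⋃ i : Fin N, Set.Ico (t i.castSucc) (t i.succ) := by
  have : ∀ j : Fin (N+1), Set.Ico (t 0) (t j) ⊆ ⋃ i : Fin N, Set.Ico (t i.castSucc) (t i.succ) := by
    intro j
    induction j using Fin.induction with
    | zero => simp
    | succ j ih =>
      intro x hx
      rcases lt_or_ge x (t j.castSucc) with hlt | hge
      · exact ih ⟨hx.1, hlt⟩
      · exact Set.mem_iUnion.2 ⟨j, hge, hx.2⟩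
  exact this _

lemma pc_good {d : ℕ} {g : ℝ → EuclideanSpace ℝ (Fin d)} {a b : ℝ}
    (h : PiecewiseContinuousOn g a b) :
    ∃ (v : ℝ → EuclideanSpace ℝ (Fin d)) (C : ℝ), Measurable v ∧ (∀ x, ‖v x‖ ≤ C) ∧
      ∀ᵐ x ∂(volume.restrict (Set.Icc a b)), v x = g x := by
  obtain ⟨N, t, hmono, h0, hlast, hp⟩ := h
  have hb : ∀ i : Fin N, ∃ C, ∀ x ∈ Set.Ico (t i.castSucc) (t i.succ), ‖g x‖ ≤ C := fun i => by
    obtain ⟨L, hL⟩ := (hp i).2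
    exact bdd_of_tendsto (hp i).1 hL
  choose Cf hCf using hb
  obtain ⟨C0, hC0⟩ := Finite.exists_le Cf
  have hre : volume.restrict (Set.Icc a b) = volume.restrict (Set.Ico a b) :=
    (Measure.restrict_congr_set Ico_ae_eq_Icc).symm
  have hcov : Set.Ico a b ⊆ ⋃ i : Fin N, Set.Ico (t i.castSucc) (t i.succ) := by
    rw [← h0, ← hlast]; exact pc_cover hmono
  have hle : volume.restrict (Set.Ico a b) ≤
      volume.restrict (⋃ i : Fin N, Set.Ico (t i.castSucc) (t i.succ)) :=
    Measure.restrict_mono hcov le_rfl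
  have hmeas : AEMeasurable g (volume.restrict (Set.Icc a b)) := by
    rw [hre]
    refine AEMeasurable.mono_measure ?_ hle
    rw [aemeasurable_iUnion_iff]
    exact fun i => ContinuousOn.aemeasurable (hp i).1 measurableSet_Ico
  have hbd : ∀ᵐ x ∂(volume.restrict (Set.Icc a b)), ‖g x‖ ≤ C0 := by
    rw [hre]
    refine Filter.Eventually.filter_mono (ae_mono hle) ?_
    rw [ae_restrict_iUnion_iff]
    intro i
    exact (ae_restrict_iff' measurableSet_Ico).2
      (Filter.Eventually.of_forall fun x hx => le_trans (hCf i x hx) (hC0 i))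
  set v0 := hmeas.mk g with hv0
  have hv0m : Measurable v0 := hmeas.measurable_mk
  have hv0e : g =ᵐ[volume.restrict (Set.Icc a b)] v0 := hmeas.ae_eq_mk
  set C := max C0 0 with hC
  refine ⟨fun x => if ‖v0 x‖ ≤ C then v0 x else 0, C, ?_, ?_, ?_⟩
  · refine Measurable.ite ?_ hv0m measurable_const
    exact measurableSet_le hv0m.norm measurable_const
  · intro x
    by_cases hx : ‖v0 x‖ ≤ C
    · simpa [hx] using hx
    · simp only [if_neg hx, norm_zero]; exact le_max_right _ _
  · filter_upwards [hv0e, hbd] with x he hb2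
    have hxC : ‖v0 x‖ ≤ C := by rw [← he]; exact le_trans hb2 (le_max_left _ _)
    rw [if_pos hxC, ← he]

lemma freeze {d : ℕ} {T : ℝ} (c2 c3 : ℝ → EuclideanSpace ℝ (Fin d))
    (v2 v3 : ℝ → EuclideanSpace ℝ (Fin d)) (C2 C3 : ℝ)
    (hv2m : Measurable v2) (hv2b : ∀ x, ‖v2 x‖ ≤ C2)
    (hv2e : ∀ᵐ x ∂(volume.restrict (Set.Icc 0 T)), v2 x = c2 x)
    (hv3m : Measurable v3) (hv3b : ∀ x, ‖v3 x‖ ≤ C3)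
    (hv3e : ∀ᵐ x ∂(volume.restrict (Set.Icc 0 T)), v3 x = c3 x)
    {t s y : ℝ} (ht : 0 ≤ t) (hts : t ≤ s) (hsT : s ≤ T)
    (hy : ∃ (u : ℝ → EuclideanSpace ℝ (Fin d)) (f : ℝ → ℝ) (C : ℝ),
        Measurable u ∧ (∀ σ, ‖u σ‖ ≤ C) ∧ ContinuousOn f (Set.Icc 0 T) ∧
        (∀ τ ∈ Set.Icc (0:ℝ) T,
          f τ = ∫ σ in (0:ℝ)..τ, ⟪c2 σ + f σ • c3 σ, u σ - (1/2 : ℝ) • c3 σ⟫) ∧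
        f t = y) :
    ∃ (u : ℝ → EuclideanSpace ℝ (Fin d)) (f : ℝ → ℝ) (C : ℝ),
        Measurable u ∧ (∀ σ, ‖u σ‖ ≤ C) ∧ ContinuousOn f (Set.Icc 0 T) ∧
        (∀ τ ∈ Set.Icc (0:ℝ) T,
          f τ = ∫ σ in (0:ℝ)..τ, ⟪c2 σ + f σ • c3 σ, u σ - (1/2 : ℝ) • c3 σ⟫) ∧
        f s = y := by
  obtain ⟨u, f, C, hum, hub, hfc, hode, hft⟩ := hy
  have htT : t ≤ T := le_trans hts hsT
  have hC : 0 ≤ C := le_trans (norm_nonneg _) (hub 0)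
  have hC2 : 0 ≤ C2 := le_trans (norm_nonneg _) (hv2b 0)
  have hC3 : 0 ≤ C3 := le_trans (norm_nonneg _) (hv3b 0)
  obtain ⟨Bf, hBf⟩ := isCompact_Icc.exists_bound_of_continuousOn hfc
  have hBf0 : 0 ≤ Bf := le_trans (norm_nonneg _) (hBf 0 ⟨le_refl _, le_trans ht htT⟩)
  set u' : ℝ → EuclideanSpace ℝ (Fin d) :=
    fun τ => if τ ≤ t then u τ else (1/2 : ℝ) • v3 τ with hu'
  set f' : ℝ → ℝ := fun τ => f (min τ t) with hf'
  have hu'm : Measurable u' := by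
    refine Measurable.ite ?_ hum (hv3m.const_smul (1/2 : ℝ))
    exact measurableSet_le measurable_id measurable_const
  have hu'b : ∀ σ, ‖u' σ‖ ≤ max C ((1/2) * C3) := by
    intro σ
    by_cases hσ : σ ≤ t
    · simp only [hu', if_pos hσ]
      exact le_trans (hub σ) (le_max_left _ _)
    · simp only [hu', if_neg hσ]
      refine le_trans ?_ (le_max_right _ _)
      rw [norm_smul, Real.norm_eq_abs, abs_of_pos (by norm_num : (0:ℝ) < 1/2)]
      gcongr
      exact hv3b σ
  have hmaps : Set.MapsTo (fun τ => min τ t) (Set.Icc 0 T) (Set.Icc 0 T) := by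
    intro τ hτ
    exact ⟨le_min hτ.1 ht, le_trans (min_le_left _ _) hτ.2⟩
  have hf'c : ContinuousOn f' (Set.Icc 0 T) :=
    hfc.comp ((continuous_id.min continuous_const).continuousOn) hmaps
  have hf'b : ∀ σ ∈ Set.Icc (0:ℝ) T, ‖f' σ‖ ≤ Bf := fun σ hσ => hBf _ (hmaps hσ)
  refine ⟨u', f', max C ((1/2) * C3), hu'm, hu'b, hf'c, ?_, by
    simp only [hf', min_eq_right hts, hft]⟩
  intro τ hτ
  by_cases hτt : τ ≤ t
  · have : f' τ = f τ := by simp only [hf', min_eq_left hτt]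
    rw [this, hode τ hτ]
    refine intervalIntegral.integral_congr ?_
    intro σ hσ
    rw [Set.uIcc_of_le hτ.1] at hσ
    have hσt : σ ≤ t := le_trans hσ.2 hτt
    simp only [hu', hf', if_pos hσt, min_eq_left hσt]
  · push_neg at hτt
    have hmin : f' τ = f t := by simp only [hf', min_eq_right hτt.le]
    -- integrability on [0, t]
    have hfsm : AEMeasurable f' (volume.restrict (Set.Ioc 0 t)) :=
      ContinuousOn.aemeasurable (hf'c.mono (fun x hx => ⟨hx.1.le, le_trans hx.2 htT⟩))
        measurableSet_Ioc
    have hI1 : IntervalIntegrable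
        (fun σ => ⟪c2 σ + f' σ • c3 σ, u' σ - (1/2 : ℝ) • c3 σ⟫) volume 0 t := by
      rw [intervalIntegrable_iff, uIoc_of_le ht]
      set H : ℝ → ℝ := fun σ => ⟪v2 σ + f' σ • v3 σ, u σ - (1/2 : ℝ) • v3 σ⟫ with hH
      have hHm : AEMeasurable H (volume.restrict (Set.Ioc 0 t)) := by
        refine AEMeasurable.inner ?_ ?_
        · exact hv2m.aemeasurable.add (hfsm.smul hv3m.aemeasurable)
        · exact hum.aemeasurable.sub ((hv3m.const_smul (1/2 : ℝ)).aemeasurable)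
      have hsub : Set.Ioc 0 t ⊆ Set.Icc 0 T := fun x hx => ⟨hx.1.le, le_trans hx.2 htT⟩
      have hv2e' := ae_restrict_of_ae_restrict_of_subset hsub hv2e
      have hv3e' := ae_restrict_of_ae_restrict_of_subset hsub hv3e
      have hbound : ∀ᵐ σ ∂(volume.restrict (Set.Ioc 0 t)),
          ‖H σ‖ ≤ (C2 + Bf * C3) * (C + (1/2) * C3) := by
        refine (ae_restrict_iff' measurableSet_Ioc).2 (Filter.Eventually.of_forall ?_)
        intro σ hσ
        refine le_trans (norm_inner_le_norm _ _) ?_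
        have h1 : ‖v2 σ + f' σ • v3 σ‖ ≤ C2 + Bf * C3 := by
          refine le_trans (norm_add_le _ _) ?_
          gcongr
          · exact hv2b σ
          · rw [norm_smul]
            gcongr
            · exact hf'b σ (hsub hσ)
            · exact hv3b σ
        have h2 : ‖u σ - (1/2 : ℝ) • v3 σ‖ ≤ C + (1/2) * C3 := by
          refine le_trans (norm_sub_le _ _) ?_
          gcongr
          · exact hub σ
          · rw [norm_smul, Real.norm_eq_abs, abs_of_pos (by norm_num : (0:ℝ) < 1/2)]
            gcongr
            exact hv3b σ
        exact mul_le_mul h1 h2 (norm_nonneg _) (by positivity)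
      have hHint : IntegrableOn H (Set.Ioc 0 t) := by
        exact Integrable.mono' (integrable_const _) hHm.aestronglyMeasurable hbound
      refine hHint.congr ?_
      filter_upwards [hv2e', hv3e',
        (ae_restrict_iff' measurableSet_Ioc).2
          (Filter.Eventually.of_forall (fun σ (hσ : σ ∈ Set.Ioc 0 t) => hσ.2))] with σ h2 h3 hσt
      simp only [hH, h2, h3, hu', hf', if_pos hσt, min_eq_left hσt]
    have hI2 : IntervalIntegrable
        (fun σ => ⟪c2 σ + f' σ • c3 σ, u' σ - (1/2 : ℝ) • c3 σ⟫) volume t τ := by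
      rw [intervalIntegrable_iff, uIoc_of_le hτt.le]
      have hsub : Set.Ioc t τ ⊆ Set.Icc 0 T := fun x hx => ⟨le_trans ht hx.1.le, le_trans hx.2 hτ.2⟩
      have hv3e' := ae_restrict_of_ae_restrict_of_subset hsub hv3e
      refine (integrable_zero _ _ _).congr ?_
      filter_upwards [hv3e',
        (ae_restrict_iff' measurableSet_Ioc).2
          (Filter.Eventually.of_forall (fun σ (hσ : σ ∈ Set.Ioc t τ) => hσ.1))] with σ h3 hσt
      simp only [hu', if_neg (not_le.2 hσt), h3]
      rw [sub_self, inner_zero_right, Pi.zero_apply]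
    rw [hmin, ← intervalIntegral.integral_add_adjacent_intervals hI1 hI2]
    have e1 : (∫ σ in (0:ℝ)..t, ⟪c2 σ + f' σ • c3 σ, u' σ - (1/2 : ℝ) • c3 σ⟫) = f t := by
      rw [hode t ⟨ht, htT⟩]
      refine intervalIntegral.integral_congr ?_
      intro σ hσ
      rw [Set.uIcc_of_le ht] at hσ
      simp only [hu', hf', if_pos hσ.2, min_eq_left hσ.2]
    have e2 : (∫ σ in t..τ, ⟪c2 σ + f' σ • c3 σ, u' σ - (1/2 : ℝ) • c3 σ⟫) = 0 := by
      have hz : (∫ σ in t..τ, ⟪c2 σ + f' σ • c3 σ, u' σ - (1/2 : ℝ) • c3 σ⟫)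
          = ∫ σ in t..τ, (0:ℝ) := by
        refine intervalIntegral.integral_congr_ae ?_
        have hsub : Set.Ioc t τ ⊆ Set.Icc 0 T := fun x hx => ⟨le_trans ht hx.1.le, le_trans hx.2 hτ.2⟩
        have hv3e'' : ∀ᵐ x ∂(volume : Measure ℝ), x ∈ Set.Icc 0 T → v3 x = c3 x :=
          (ae_restrict_iff' measurableSet_Icc).1 hv3e
        filter_upwards [hv3e''] with σ h3 hσ
        rw [uIoc_of_le hτt.le] at hσ
        have h3' : v3 σ = c3 σ := h3 (hsub hσ)
        simp only [hu', if_neg (not_le.2 hσ.1), h3']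
        rw [sub_self, inner_zero_right]
      rw [hz, intervalIntegral.integral_zero]
    rw [e1, e2, add_zero]

theorem stmt9 (d : ℕ) (T : ℝ) (hT : 0 < T)
    (c2 c3 : ℝ → EuclideanSpace ℝ (Fin d))
    (h2 : PiecewiseContinuousOn c2 0 T) (h3 : PiecewiseContinuousOn c3 0 T)
    (A : ℝ → Set ℝ)
    (hA : ∀ t y, y ∈ A t ↔
      ∃ (u : ℝ → EuclideanSpace ℝ (Fin d)) (f : ℝ → ℝ) (C : ℝ),
        Measurable u ∧ (∀ s, ‖u s‖ ≤ C) ∧ ContinuousOn f (Set.Icc 0 T) ∧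
        (∀ τ ∈ Set.Icc (0:ℝ) T,
          f τ = ∫ s in (0:ℝ)..τ, ⟪c2 s + f s • c3 s, u s - (1/2 : ℝ) • c3 s⟫) ∧
        f t = y)
    (lower upper : ℝ → EReal)
    (hlow : ∀ t, lower t = sInf ((fun y : ℝ => (y : EReal)) '' A t))
    (hupp : ∀ t, upper t = sSup ((fun y : ℝ => (y : EReal)) '' A t)) :
    AntitoneOn lower (Set.Icc 0 T) ∧ MonotoneOn upper (Set.Icc 0 T) ∧
    ∀ t ∈ Set.Ioc (0:ℝ) T,
      Filter.Tendsto lower (nhdsWithin t (Set.Iio t)) (nhds (lower t)) ∧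
      Filter.Tendsto upper (nhdsWithin t (Set.Iio t)) (nhds (upper t)) := by
  obtain ⟨v2, C2, hv2m, hv2b, hv2e⟩ := pc_good h2
  obtain ⟨v3, C3, hv3m, hv3b, hv3e⟩ := pc_good h3
  have hsub : ∀ {t s : ℝ}, 0 ≤ t → t ≤ s → s ≤ T → A t ⊆ A s := by
    intro t s ht hts hsT y hy
    rw [hA] at hy ⊢
    exact freeze c2 c3 v2 v3 C2 C3 hv2m hv2b hv2e hv3m hv3b hv3e ht hts hsT hy
  have hmono : MonotoneOn upper (Set.Icc 0 T) := by
    intro a ha b hb hab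
    rw [hupp, hupp]
    exact sSup_le_sSup (Set.image_mono (hsub ha.1 hab hb.2))
  have hanti : AntitoneOn lower (Set.Icc 0 T) := by
    intro a ha b hb hab
    rw [hlow, hlow]
    exact sInf_le_sInf (Set.image_mono (hsub ha.1 hab hb.2))
  refine ⟨hanti, hmono, ?_⟩
  intro t ht
  have hmem : ∀ τ : ℝ, max τ 0 ∈ Set.Icc 0 T → max τ 0 ≤ t →
      True := fun _ _ _ => trivial
  have hmax_mem : ∀ τ ∈ Set.Iio t, max τ 0 ∈ Set.Icc 0 T := by
    intro τ hτ
    exact ⟨le_max_right _ _, max_le (le_of_lt (lt_of_lt_of_le hτ ht.2)) (le_trans ht.1.le ht.2)⟩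
  have htIcc : t ∈ Set.Icc (0:ℝ) T := ⟨ht.1.le, ht.2⟩
  have hIooIcc : Set.Ioo 0 t ⊆ Set.Icc 0 T := fun x hx => ⟨hx.1.le, le_trans hx.2.le ht.2⟩
  have hne : (nhdsWithin t (Set.Ioo 0 t)).NeBot := by
    rw [nhdsWithin_Ioo_eq_nhdsLT ht.1]
    infer_instance
  have hIoomem : Set.Ioo 0 t ∈ nhdsWithin t (Set.Iio t) := Ioo_mem_nhdsLT ht.1
  -- key bound lemma: for any y ∈ A t and any EReal S that dominates (f τ) for τ ∈ Ioo 0 t...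
  have hkey : ∀ (P : EReal → EReal → Prop), True := fun _ => trivial
  constructor
  · -- lower
    set L : ℝ → EReal := fun τ => lower (max τ 0) with hL
    have hLanti : AntitoneOn L (Set.Iio t) := by
      intro a ha b hb hab
      exact hanti (hmax_mem a ha) (hmax_mem b hb) (max_le_max hab le_rfl)
    have htend : Tendsto L (nhdsWithin t (Set.Iio t)) (𝓝 (sInf (L '' Set.Iio t))) :=
      hLanti.tendsto_nhdsLT (OrderBot.bddBelow _)
    have hS : sInf (L '' Set.Iio t) = lower t := by
      refine le_antisymm ?_ ?_
      · -- sInf ≤ lower t : ∀ y ∈ A t, sInf ≤ y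
        rw [hlow]
        refine le_sInf ?_
        rintro x ⟨y, hyA, rfl⟩
        obtain ⟨u, f, C, hum, hub, hfc, hode, hft⟩ := (hA t y).1 hyA
        have hfA : ∀ τ, f τ ∈ A τ := fun τ => (hA τ (f τ)).2 ⟨u, f, C, hum, hub, hfc, hode, rfl⟩
        have hco : Tendsto (fun τ => ((f τ : ℝ) : EReal)) (nhdsWithin t (Set.Ioo 0 t))
            (𝓝 ((y : ℝ) : EReal)) := by
          rw [← hft]
          exact (continuous_coe_real_ereal.tendsto _).comp
            ((hfc t htIcc).mono_left (nhdsWithin_mono _ hIooIcc))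
        refine ge_of_tendsto hco ?_
        filter_upwards [self_mem_nhdsWithin] with τ hτ
        calc sInf (L '' Set.Iio t) ≤ L τ := sInf_le (Set.mem_image_of_mem _ hτ.2)
          _ = lower τ := by rw [hL]; simp only [max_eq_left hτ.1.le]
          _ ≤ (f τ : EReal) := by
              rw [hlow]
              exact sInf_le (Set.mem_image_of_mem _ (hfA τ))
      · -- lower t ≤ sInf
        refine le_sInf ?_
        rintro x ⟨τ, hτ, rfl⟩
        exact hanti (hmax_mem τ hτ) htIcc (max_le hτ.le ht.1.le)
    rw [← hS]
    refine htend.congr' ?_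
    filter_upwards [hIoomem] with τ hτ
    rw [hL]
    simp only [max_eq_left hτ.1.le]
  · -- upper
    set U : ℝ → EReal := fun τ => upper (max τ 0) with hU
    have hUmono : MonotoneOn U (Set.Iio t) := by
      intro a ha b hb hab
      exact hmono (hmax_mem a ha) (hmax_mem b hb) (max_le_max hab le_rfl)
    have htend : Tendsto U (nhdsWithin t (Set.Iio t)) (𝓝 (sSup (U '' Set.Iio t))) :=
      hUmono.tendsto_nhdsLT (OrderTop.bddAbove _)
    have hS : sSup (U '' Set.Iio t) = upper t := by
      refine le_antisymm ?_ ?_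
      · refine sSup_le ?_
        rintro x ⟨τ, hτ, rfl⟩
        exact hmono (hmax_mem τ hτ) htIcc (max_le hτ.le ht.1.le)
      · rw [hupp]
        refine sSup_le ?_
        rintro x ⟨y, hyA, rfl⟩
        obtain ⟨u, f, C, hum, hub, hfc, hode, hft⟩ := (hA t y).1 hyA
        have hfA : ∀ τ, f τ ∈ A τ := fun τ => (hA τ (f τ)).2 ⟨u, f, C, hum, hub, hfc, hode, rfl⟩
        have hco : Tendsto (fun τ => ((f τ : ℝ) : EReal)) (nhdsWithin t (Set.Ioo 0 t))
            (𝓝 ((y : ℝ) : EReal)) := by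
          rw [← hft]
          exact (continuous_coe_real_ereal.tendsto _).comp
            ((hfc t htIcc).mono_left (nhdsWithin_mono _ hIooIcc))
        refine le_of_tendsto hco ?_
        filter_upwards [self_mem_nhdsWithin] with τ hτ
        calc ((f τ : ℝ) : EReal) ≤ upper τ := by
              rw [hupp]
              exact le_sSup (Set.mem_image_of_mem _ (hfA τ))
          _ = U τ := by rw [hU]; simp only [max_eq_left hτ.1.le]
          _ ≤ sSup (U '' Set.Iio t) := le_sSup (Set.mem_image_of_mem _ hτ.2)
    rw [← hS]
    refine htend.congr' ?_
    filter_upwards [hIoomem] with τ hτ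
    rw [hU]
    simp only [max_eq_left hτ.1.le]
end

section
/- Suppose $g_k$ solves $g_k(t) = k \int_0^t \|c_2^*(s) + c_3(s) g_k(s)\|\, ds$ and $h(s)$ minimizes $x \mapsto \|c_2^*(s) + c_3(s)x\|$. Then $|g_k(t)| \ge |k| \int_0^t \|c_2^*(s) + c_3(s) h(s)\|\, ds$ for all $k \in \mathbb{R}$ and $t \in [0,T]$. Consequently, if $\int_0^t \|c_2^*(s) + c_3(s) h(s)\|\, ds > 0$, then $\lim_{k \to +\infty} g_k(t) = +\infty$ and $\lim_{k \to -\infty} g_k(t) = -\infty$. -/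
open MeasureTheory Set Filter

lemma pw_piece_bound {E : Type*} [NormedAddCommGroup E] {f : ℝ → E} {a b : ℝ}
    (hc : ContinuousOn f (Set.Ico a b)) {L : E}
    (hL : Filter.Tendsto f (nhdsWithin b (Set.Iio b)) (nhds L)) :
    ∃ C, ∀ x ∈ Set.Ico a b, ‖f x‖ ≤ C := by
  rcases le_or_gt b a with hba | hab
  · exact ⟨0, fun x hx => absurd (hx.2.trans_le hba) (not_lt.2 hx.1)⟩
  set g : ℝ → E := fun x => if x = b then L else f x with hg
  have hgf : ∀ x ∈ Set.Ico a b, g x = f x := fun x hx => if_neg (ne_of_lt hx.2)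
  have hIco : Set.Icc a b \ {b} = Set.Ico a b := by
    ext x; simp [Set.mem_diff, Set.mem_Icc, Set.mem_Ico, lt_iff_le_and_ne, and_assoc]
  have hgc : ContinuousOn g (Set.Icc a b) := by
    intro x hx
    rcases eq_or_lt_of_le hx.2 with rfl | hxb
    · rw [← continuousWithinAt_diff_self, ContinuousWithinAt]
      have hgx : g x = L := if_pos rfl
      rw [hgx, hIco]
      have h1 : Tendsto f (nhdsWithin x (Set.Ico a x)) (nhds L) :=
        hL.mono_left (nhdsWithin_mono _ (fun y hy => hy.2))
      refine h1.congr' ?_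
      filter_upwards [self_mem_nhdsWithin] with y hy using (hgf y hy).symm
    · have hf' : ContinuousWithinAt f (Set.Ico a b) x := hc x ⟨hx.1, hxb⟩
      have hg' : ContinuousWithinAt g (Set.Ico a b) x :=
        hf'.congr hgf (hgf x ⟨hx.1, hxb⟩)
      refine hg'.mono_of_mem_nhdsWithin ?_
      rw [← hIco, Set.diff_eq]
      exact Filter.inter_mem self_mem_nhdsWithin
        (mem_nhdsWithin_of_mem_nhds (isOpen_compl_singleton.mem_nhds (by simpa using hxb.ne)))
  obtain ⟨C, hC⟩ := (isCompact_Icc (a := a) (b := b)).exists_bound_of_continuousOn hgc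
  exact ⟨C, fun x hx => (hgf x hx) ▸ hC x (Set.Ico_subset_Icc_self hx)⟩

lemma pw_cover {N : ℕ} {t : Fin (N + 1) → ℝ} (hmono : StrictMono t) {a b : ℝ}
    (h0 : t 0 = a) (hlast : t (Fin.last N) = b) :
    Set.Ico a b ⊆ ⋃ i : Fin N, Set.Ico (t i.castSucc) (t i.succ) := by
  intro x hx
  have hN : 0 < N := by
    rcases Nat.eq_zero_or_pos N with rfl | h
    · exfalso
      have : a = b := h0 ▸ hlast ▸ rfl
      exact absurd (hx.2.trans_le (this ▸ hx.1)) (lt_irrefl x)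
    · exact h
  classical
  set S : Finset (Fin (N + 1)) := Finset.univ.filter (fun i => t i ≤ x) with hS
  have hSne : S.Nonempty := ⟨0, by simp [hS, h0, hx.1]⟩
  set j := S.max' hSne with hj
  have hjx : t j ≤ x := by
    have := S.max'_mem hSne
    simpa [hS] using this
  have hjlt : (j : ℕ) < N := by
    by_contra hcon
    have : j = Fin.last N := by
      apply Fin.ext
      simpa [Fin.last] using le_antisymm (Nat.lt_succ_iff.mp j.2) (not_lt.mp hcon)
    rw [this, hlast] at hjx
    exact absurd (hx.2.trans_le hjx) (lt_irrefl x)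
  refine Set.mem_iUnion.2 ⟨⟨j, hjlt⟩, ?_, ?_⟩
  · simpa [Fin.castSucc] using hjx
  · by_contra hcon
    have hmem : (Fin.succ ⟨j, hjlt⟩ : Fin (N+1)) ∈ S := by
      have hle := not_lt.mp hcon
      simp only [hS, Finset.mem_filter, Finset.mem_univ, true_and]
      simpa [Fin.succ_mk] using hle
    have := S.le_max' _ hmem
    rw [← hj] at this
    have : (j : ℕ) + 1 ≤ (j : ℕ) := by simpa [Fin.le_def, Fin.succ] using this
    omega

lemma pw_aux {E : Type*} [NormedAddCommGroup E] {f : ℝ → E} {a b : ℝ}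
    (hf : PiecewiseContinuousOn f a b) :
    AEStronglyMeasurable f (volume.restrict (Set.Ico a b)) ∧
      ∃ C, ∀ x ∈ Set.Ico a b, ‖f x‖ ≤ C := by
  obtain ⟨N, t, hmono, h0, hlast, hp⟩ := hf
  have hcover := pw_cover hmono h0 hlast
  constructor
  · have : AEStronglyMeasurable f
        (volume.restrict (⋃ i : Fin N, Set.Ico (t i.castSucc) (t i.succ))) := by
      rw [aestronglyMeasurable_iUnion_iff]
      exact fun i => ((hp i).1).aestronglyMeasurable measurableSet_Ico
    exact this.mono_measure (Measure.restrict_mono hcover le_rfl)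
  · have hB := fun i : Fin N => pw_piece_bound (hp i).1 (hp i).2.choose_spec
    choose C hC using hB
    refine ⟨∑ i : Fin N, max (C i) 0, fun x hx => ?_⟩
    obtain ⟨i, hi⟩ := Set.mem_iUnion.1 (hcover hx)
    calc ‖f x‖ ≤ C i := hC i x hi
      _ ≤ max (C i) 0 := le_max_left _ _
      _ ≤ ∑ i : Fin N, max (C i) 0 :=
        Finset.single_le_sum (fun j _ => le_max_right (C j) 0) (Finset.mem_univ i)

theorem stmt13 (d : ℕ) (T : ℝ) (hT : 0 < T)
    (c2 c3 : ℝ → EuclideanSpace ℝ (Fin d))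
    (h2 : PiecewiseContinuousOn c2 0 T) (h3 : PiecewiseContinuousOn c3 0 T)
    (h : ℝ → ℝ)
    (hmin : ∀ s ∈ Set.Icc (0:ℝ) T, ∀ x : ℝ, ‖c2 s + h s • c3 s‖ ≤ ‖c2 s + x • c3 s‖)
    (hint : IntervalIntegrable (fun s => ‖c2 s + h s • c3 s‖) volume 0 T)
    (g : ℝ → ℝ → ℝ)
    (hsol : ∀ k : ℝ, ContinuousOn (g k) (Set.Icc 0 T) ∧
      ∀ t ∈ Set.Icc (0:ℝ) T, g k t = k * ∫ s in (0:ℝ)..t, ‖c2 s + g k s • c3 s‖) :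
    (∀ k : ℝ, ∀ t ∈ Set.Icc (0:ℝ) T,
      |k| * ∫ s in (0:ℝ)..t, ‖c2 s + h s • c3 s‖ ≤ |g k t|) ∧
    ∀ t ∈ Set.Icc (0:ℝ) T, (0 < ∫ s in (0:ℝ)..t, ‖c2 s + h s • c3 s‖) →
      Filter.Tendsto (fun k : ℝ => g k t) Filter.atTop Filter.atTop ∧
      Filter.Tendsto (fun k : ℝ => g k t) Filter.atBot Filter.atBot := by
  obtain ⟨m2, C2, hC2⟩ := pw_aux h2
  obtain ⟨m3, C3, hC3⟩ := pw_aux h3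
  -- small integrand integrable on [0,t]
  have hsm : ∀ t ∈ Set.Icc (0:ℝ) T,
      IntervalIntegrable (fun s => ‖c2 s + h s • c3 s‖) volume 0 t := by
    intro t ht
    refine hint.mono_set (Set.uIcc_subset_uIcc ?_ ?_) <;>
      rw [Set.uIcc_of_le hT.le]
    · exact ⟨le_refl 0, hT.le⟩
    · exact ht
  -- key: big integrand integrable and its integral dominates the small one
  have key : ∀ k : ℝ, ∀ t ∈ Set.Icc (0:ℝ) T,
      IntervalIntegrable (fun s => ‖c2 s + g k s • c3 s‖) volume 0 t ∧
      (∫ s in (0:ℝ)..t, ‖c2 s + h s • c3 s‖) ≤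
        ∫ s in (0:ℝ)..t, ‖c2 s + g k s • c3 s‖ := by
    intro k t ht
    set F : ℝ → ℝ := fun s => ‖c2 s + g k s • c3 s‖ with hF
    obtain ⟨Cg, hCg⟩ := (isCompact_Icc (a := (0:ℝ)) (b := T)).exists_bound_of_continuousOn
      (hsol k).1
    have hgm : AEStronglyMeasurable (g k) (volume.restrict (Set.Ico 0 T)) :=
      ((hsol k).1.aestronglyMeasurable measurableSet_Icc).mono_measure
        (Measure.restrict_mono Set.Ico_subset_Icc_self le_rfl)
    have hFm : AEStronglyMeasurable F (volume.restrict (Set.Ico 0 T)) :=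
      (m2.add (hgm.smul m3)).norm
    have hIco : IntegrableOn F (Set.Ico 0 T) volume := by
      have hconst : IntegrableOn (fun _ : ℝ => C2 + Cg * C3) (Set.Ico 0 T) volume :=
        integrableOn_const (by simp [Real.volume_Ico])
      refine Integrable.mono' hconst hFm ?_
      filter_upwards [ae_restrict_mem measurableSet_Ico] with x hx
      have hb : F x ≤ C2 + Cg * C3 := by
        calc F x ≤ ‖c2 x‖ + ‖g k x • c3 x‖ := norm_add_le _ _
          _ = ‖c2 x‖ + |g k x| * ‖c3 x‖ := by rw [norm_smul, Real.norm_eq_abs]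
          _ ≤ C2 + Cg * C3 := by
              have h1 := hC2 x hx
              have h2 := hC3 x hx
              have h3 : |g k x| ≤ Cg := by
                have := hCg x (Set.Ico_subset_Icc_self hx)
                simpa [Real.norm_eq_abs] using this
              have : |g k x| * ‖c3 x‖ ≤ Cg * C3 :=
                mul_le_mul h3 h2 (norm_nonneg _) ((abs_nonneg _).trans h3)
              linarith
      rw [Real.norm_eq_abs, abs_of_nonneg (norm_nonneg _)]
      exact hb
    have hIB : IntervalIntegrable F volume 0 t := by
      rw [intervalIntegrable_iff_integrableOn_Ioc_of_le ht.1]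
      have hsub : IntegrableOn F (Set.Ioc 0 t \ {T}) volume :=
        hIco.mono_set (fun x hx => ⟨hx.1.1.le, lt_of_le_of_ne (hx.1.2.trans ht.2) hx.2⟩)
      have hsing : IntegrableOn F {T} volume := by
        rw [IntegrableOn, Measure.restrict_eq_zero.2 (measure_singleton T)]
        exact integrable_zero_measure
      refine (hsub.union hsing).mono_set (fun x hx => ?_)
      by_cases hxT : x = T
      · exact Or.inr (by simp [hxT])
      · exact Or.inl ⟨hx, hxT⟩
    refine ⟨hIB, intervalIntegral.integral_mono_on ht.1 (hsm t ht) hIB ?_⟩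
    intro s hs
    exact hmin s ⟨hs.1, hs.2.trans ht.2⟩ (g k s)
  have part1 : ∀ k : ℝ, ∀ t ∈ Set.Icc (0:ℝ) T,
      |k| * ∫ s in (0:ℝ)..t, ‖c2 s + h s • c3 s‖ ≤ |g k t| := by
    intro k t ht
    rw [(hsol k).2 t ht, abs_mul]
    have hnn : (0:ℝ) ≤ ∫ s in (0:ℝ)..t, ‖c2 s + g k s • c3 s‖ :=
      intervalIntegral.integral_nonneg ht.1 (fun s _ => norm_nonneg _)
    rw [abs_of_nonneg hnn]
    exact mul_le_mul_of_nonneg_left (key k t ht).2 (abs_nonneg k)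
  refine ⟨part1, fun t ht hpos => ⟨?_, ?_⟩⟩
  · refine Filter.tendsto_atTop_mono' _ ?_
      ((Filter.tendsto_id).atTop_mul_const hpos)
    filter_upwards [Filter.eventually_ge_atTop (0:ℝ)] with k hk
    rw [(hsol k).2 t ht]
    exact mul_le_mul_of_nonneg_left (key k t ht).2 hk
  · refine Filter.tendsto_atBot_mono' _ ?_
      ((Filter.tendsto_id).atBot_mul_const hpos)
    filter_upwards [Filter.eventually_le_atBot (0:ℝ)] with k hk
    rw [(hsol k).2 t ht]
    exact mul_le_mul_of_nonpos_left (key k t ht).2 hk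
end

section
/- Let $c_3: [\underline{t}, t] \to \mathbb{R}^d$ be bounded and measurable and $h: [\underline{t}, t] \to (-\infty, 0]$ be bounded and measurable. For $k < 0$ define $\tilde{g}_k(s) = -k \int_{\underline{t}}^s e^{k \int_\tau^s \|c_3(z)\|\,dz} \|c_3(\tau)\| h(\tau)\, d\tau$. If $h$ is non-increasing on $\{s : c_3(s) \ne 0\}$, then for every $s$ with $c_3(s) \ne 0$, $\tilde{g}_k(s) \ge h(s)(1 - e^{k \int_{\underline{t}}^s \|c_3(z)\|\,dz}) \ge h(s)$. -/
open MeasureTheory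

private lemma bdd_ii {φ : ℝ → ℝ} (hφ : Measurable φ) (a b M : ℝ)
    (hM : ∀ x ∈ Set.uIcc a b, |φ x| ≤ M) :
    IntervalIntegrable φ volume a b := by
  rw [intervalIntegrable_iff]
  apply Measure.integrableOn_of_bounded (M := M)
  · simp only [Set.uIoc]
    exact measure_Ioc_lt_top.ne
  · exact hφ.aestronglyMeasurable
  · refine (ae_restrict_iff' measurableSet_uIoc).2 (Filter.Eventually.of_forall ?_)
    intro x hx
    simpa using hM x (Set.uIoc_subset_uIcc hx)

private lemma exp_step (a δ : ℝ) (hδ : 0 ≤ δ) :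
    δ * Real.exp (a + δ) ≤ (Real.exp (a + δ) - Real.exp a) + δ ^ 2 * Real.exp (a + δ) := by
  rw [Real.exp_add]
  have hp : (0:ℝ) < 1 - δ + δ ^ 2 := by nlinarith [sq_nonneg (δ - 1)]
  have h1 : 1 + δ ≤ Real.exp δ := by linarith [Real.add_one_le_exp δ]
  have h2 : (1:ℝ) ≤ Real.exp δ * (1 - δ + δ ^ 2) := by nlinarith
  have h3 := mul_le_mul_of_nonneg_left h2 (Real.exp_pos a).le
  nlinarith [h3]

theorem stmt14 (d : ℕ) (t0 t : ℝ) (ht : t0 < t)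
    (c3 : ℝ → EuclideanSpace ℝ (Fin d)) (hc3m : Measurable c3)
    (C : ℝ) (hc3b : ∀ s, ‖c3 s‖ ≤ C)
    (h : ℝ → ℝ) (hhm : Measurable h) (hhb : ∀ s, |h s| ≤ C)
    (hneg : ∀ s ∈ Set.Icc t0 t, h s ≤ 0)
    (hmono : ∀ s1 ∈ Set.Icc t0 t, ∀ s2 ∈ Set.Icc t0 t,
      c3 s1 ≠ 0 → c3 s2 ≠ 0 → s1 ≤ s2 → h s2 ≤ h s1)
    (k : ℝ) (hk : k < 0) (g : ℝ → ℝ)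
    (hg : ∀ s, g s = -k * ∫ τ in t0..s,
      Real.exp (k * ∫ z in τ..s, ‖c3 z‖) * (‖c3 τ‖ * h τ)) :
    ∀ s ∈ Set.Icc t0 t, c3 s ≠ 0 →
      h s * (1 - Real.exp (k * ∫ z in t0..s, ‖c3 z‖)) ≤ g s ∧
      h s ≤ h s * (1 - Real.exp (k * ∫ z in t0..s, ‖c3 z‖)) := by
  intro s hs hcs
  obtain ⟨hts, hst⟩ := hs
  set f : ℝ → ℝ := fun z => ‖c3 z‖ with hfdef
  have hfm : Measurable f := hc3m.norm
  have hf0 : ∀ z, 0 ≤ f z := fun z => norm_nonneg _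
  have hC0 : 0 ≤ C := le_trans (hf0 t0) (hc3b t0)
  have hfi : ∀ a b : ℝ, IntervalIntegrable f volume a b := by
    intro a b
    exact bdd_ii hfm a b C (fun x _ => by rw [abs_of_nonneg (hf0 x)]; exact hc3b x)
  set F : ℝ → ℝ := fun x => ∫ z in t0..x, f z with hFdef
  have hFadd : ∀ a b : ℝ, F b - F a = ∫ z in a..b, f z := by
    intro a b
    have := intervalIntegral.integral_add_adjacent_intervals (hfi t0 a) (hfi a b)
    simp only [hFdef]
    linarith [this]
  have hFmono : Monotone F := by
    intro a b hab
    have h1 : 0 ≤ ∫ z in a..b, f z :=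
      intervalIntegral.integral_nonneg hab (fun x _ => hf0 x)
    have := hFadd a b
    linarith
  have hFcont : Continuous F := intervalIntegral.continuous_primitive hfi t0
  have hFlen : ∀ a b : ℝ, a ≤ b → F b - F a ≤ C * (b - a) := by
    intro a b hab
    rw [hFadd]
    calc (∫ z in a..b, f z) ≤ ∫ _z in a..b, C :=
          intervalIntegral.integral_mono_on hab (hfi a b) intervalIntegrable_const
            (fun x _ => hc3b x)
      _ = C * (b - a) := by simp [mul_comm]
  have hF0 : F t0 = 0 := intervalIntegral.integral_same
  have hFs0 : 0 ≤ F s := by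
    have := hFmono hts; rw [hF0] at this; exact this
  set β : ℝ := -k with hβdef
  have hβ : 0 < β := by simp [hβdef]; linarith
  set u : ℝ → ℝ := fun τ => Real.exp (β * F τ) with hudef
  have hucont : Continuous u := Real.continuous_exp.comp (continuous_const.mul hFcont)
  have humono : Monotone u := fun a b hab =>
    Real.exp_le_exp.2 (mul_le_mul_of_nonneg_left (hFmono hab) hβ.le)
  have hu0 : ∀ τ, 0 < u τ := fun τ => Real.exp_pos _
  have hut0 : u t0 = 1 := by simp [hudef, hF0]
  have hus : ∀ τ ∈ Set.Icc t0 s, u τ ≤ u s := fun τ hτ => humono hτ.2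
  -- integrability of f * u on subintervals of [t0, s]
  have hfui : ∀ a b : ℝ, a ∈ Set.Icc t0 s → b ∈ Set.Icc t0 s →
      IntervalIntegrable (fun τ => f τ * u τ) volume a b := by
    intro a b ha hb
    refine bdd_ii (hfm.mul hucont.measurable) a b (C * u s) ?_
    intro x hx
    have hx' : x ∈ Set.Icc t0 s := by
      rcases Set.uIcc_subset_Icc ha hb hx with h'
      exact h'
    show |f x * u x| ≤ C * u s
    rw [abs_of_nonneg (mul_nonneg (hf0 x) (hu0 x).le)]
    exact mul_le_mul (hc3b x) (hus x hx') (hu0 x).le hC0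
  -- THE KEY INEQUALITY
  have key : β * ∫ τ in t0..s, f τ * u τ ≤ u s - 1 := by
    have claim : ∀ n : ℕ, 0 < n →
        β * (∫ τ in t0..s, f τ * u τ) ≤ (u s - 1) +
          (β * (C * (s - t0)) * (β * F s) * Real.exp (β * F s)) / n := by
      intro n hn
      set L : ℝ := (s - t0) / n with hLdef
      have hL0 : 0 ≤ L := div_nonneg (by linarith) (Nat.cast_nonneg n)
      set τ : ℕ → ℝ := fun i => t0 + i * L with hτdef
      have hτ0 : τ 0 = t0 := by simp [hτdef]
      have hτn : τ n = s := by
        simp only [hτdef, hLdef]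
        field_simp
        ring
      have hτstep : ∀ i : ℕ, τ (i + 1) - τ i = L := by
        intro i; simp only [hτdef]; push_cast; ring
      have hτmono : Monotone τ := by
        apply monotone_nat_of_le_succ
        intro i
        have := hτstep i; linarith
      have hτmem : ∀ i : ℕ, i ≤ n → τ i ∈ Set.Icc t0 s := by
        intro i hi
        constructor
        · rw [← hτ0]; exact hτmono (Nat.zero_le i)
        · rw [← hτn]; exact hτmono hi
      -- split the integral
      have hsplit : (∫ τ' in t0..s, f τ' * u τ') =
          ∑ i ∈ Finset.range n, ∫ τ' in τ i..τ (i+1), f τ' * u τ' := by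
        rw [← hτ0, ← hτn]
        exact (intervalIntegral.sum_integral_adjacent_intervals (fun i hi =>
          hfui _ _ (hτmem i (le_of_lt hi)) (hτmem (i+1) hi))).symm
      -- per-interval bound
      set δ : ℕ → ℝ := fun i => β * (F (τ (i+1)) - F (τ i)) with hδdef
      have hδ0 : ∀ i, 0 ≤ δ i := by
        intro i
        have h1 : τ i ≤ τ (i+1) := by linarith [hτstep i]
        exact mul_nonneg hβ.le (sub_nonneg.2 (hFmono h1))
      have hδle : ∀ i, δ i ≤ β * (C * L) := by
        intro i
        have h1 : F (τ (i+1)) - F (τ i) ≤ C * (τ (i+1) - τ i) :=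
          hFlen _ _ (by linarith [hτstep i])
        rw [hτstep i] at h1
        exact mul_le_mul_of_nonneg_left h1 hβ.le
      have hper : ∀ i < n, β * (∫ τ' in τ i..τ (i+1), f τ' * u τ') ≤
          δ i * Real.exp (β * F (τ i) + δ i) := by
        intro i hi
        have hab : τ i ≤ τ (i + 1) := by linarith [hτstep i]
        have h1 : (∫ τ' in τ i..τ (i+1), f τ' * u τ') ≤
            ∫ τ' in τ i..τ (i+1), f τ' * u (τ (i+1)) := by
          apply intervalIntegral.integral_mono_on hab
            (hfui _ _ (hτmem i hi.le) (hτmem (i+1) hi))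
            (by
              refine bdd_ii (hfm.mul measurable_const) _ _ (C * u (τ (i+1))) ?_
              intro x _
              show |f x * u (τ (i+1))| ≤ _
              rw [abs_of_nonneg (mul_nonneg (hf0 x) (hu0 _).le)]
              exact mul_le_mul_of_nonneg_right (hc3b x) (hu0 _).le)
          intro x hx
          exact mul_le_mul_of_nonneg_left (humono hx.2) (hf0 x)
        have h2 : (∫ τ' in τ i..τ (i+1), f τ' * u (τ (i+1))) =
            (F (τ (i+1)) - F (τ i)) * u (τ (i+1)) := by
          rw [intervalIntegral.integral_mul_const, hFadd]
        have h3 : β * F (τ i) + δ i = β * F (τ (i+1)) := by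
          simp only [hδdef]; ring
        have h4 : u (τ (i+1)) = Real.exp (β * F (τ i) + δ i) := by
          rw [h3]
        calc β * (∫ τ' in τ i..τ (i+1), f τ' * u τ')
            ≤ β * ((F (τ (i+1)) - F (τ i)) * u (τ (i+1))) := by
              rw [← h2]; exact mul_le_mul_of_nonneg_left h1 hβ.le
          _ = δ i * Real.exp (β * F (τ i) + δ i) := by rw [h4, hδdef]; ring
      -- scalar step + telescoping
      have hstep2 : ∀ i < n, δ i * Real.exp (β * F (τ i) + δ i) ≤
          (u (τ (i+1)) - u (τ i)) + (β * (C * L)) * δ i * Real.exp (β * F s) := by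
        intro i hi
        have h3 : β * F (τ i) + δ i = β * F (τ (i+1)) := by
          simp only [hδdef]; ring
        have e1 := exp_step (β * F (τ i)) (δ i) (hδ0 i)
        have h5 : Real.exp (β * F (τ (i+1))) ≤ Real.exp (β * F s) :=
          Real.exp_le_exp.2 (mul_le_mul_of_nonneg_left (hFmono (hτmem (i+1) hi).2) hβ.le)
        have h6 : δ i ^ 2 * Real.exp (β * F (τ i) + δ i) ≤
            (β * (C * L)) * δ i * Real.exp (β * F s) := by
          rw [h3]
          have : δ i ^ 2 ≤ (β * (C * L)) * δ i := by
            have := hδle i; have := hδ0 i; nlinarith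
          exact mul_le_mul this h5 (Real.exp_pos _).le
            (mul_nonneg (mul_nonneg hβ.le (mul_nonneg hC0 hL0)) (hδ0 i))
        have h7 : u (τ (i+1)) - u (τ i) =
            Real.exp (β * F (τ i) + δ i) - Real.exp (β * F (τ i)) := by
          rw [h3]
        linarith
      have htel : ∑ i ∈ Finset.range n, (u (τ (i+1)) - u (τ i)) = u s - 1 := by
        rw [Finset.sum_range_sub (fun i => u (τ i)), hτ0, hτn, hut0]
      have hδtel : ∑ i ∈ Finset.range n, δ i = β * F s := by
        have : ∑ i ∈ Finset.range n, δ i =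
            ∑ i ∈ Finset.range n, (β * F (τ (i+1)) - β * F (τ i)) := by
          apply Finset.sum_congr rfl; intro i _; simp only [hδdef]; ring
        rw [this, Finset.sum_range_sub (fun i => β * F (τ i)), hτ0, hτn, hF0]
        ring
      calc β * (∫ τ' in t0..s, f τ' * u τ')
          = ∑ i ∈ Finset.range n, β * (∫ τ' in τ i..τ (i+1), f τ' * u τ') := by
            rw [hsplit, Finset.mul_sum]
        _ ≤ ∑ i ∈ Finset.range n,
            ((u (τ (i+1)) - u (τ i)) + (β * (C * L)) * δ i * Real.exp (β * F s)) := by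
            apply Finset.sum_le_sum
            intro i hi
            exact le_trans (hper i (Finset.mem_range.1 hi)) (hstep2 i (Finset.mem_range.1 hi))
        _ = (u s - 1) + (β * (C * L)) * (β * F s) * Real.exp (β * F s) := by
            rw [Finset.sum_add_distrib, htel]
            congr 1
            rw [← Finset.sum_mul, ← Finset.mul_sum, hδtel]
        _ ≤ (u s - 1) + (β * (C * (s - t0)) * (β * F s) * Real.exp (β * F s)) / n := by
            apply add_le_add_right
            rw [hLdef]
            rw [le_div_iff₀ (by exact_mod_cast hn)]
            have hcast : (0:ℝ) < n := by exact_mod_cast hn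
            field_simp
            exact le_refl _
    -- take n → ∞
    set K : ℝ := β * (C * (s - t0)) * (β * F s) * Real.exp (β * F s) with hKdef
    have hK0 : 0 ≤ K :=
      mul_nonneg (mul_nonneg (mul_nonneg hβ.le (mul_nonneg hC0 (by linarith)))
        (mul_nonneg hβ.le hFs0)) (Real.exp_pos _).le
    refine le_of_forall_pos_le_add ?_
    intro ε hε
    obtain ⟨n, hn⟩ := exists_nat_gt (K / ε)
    have hn0 : 0 < n := by
      by_contra hcon
      push_neg at hcon
      interval_cases n
      simp at hn
      nlinarith [div_nonneg hK0 hε.le]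
    have hKn : K / n ≤ ε := by
      rw [div_le_iff₀ (by exact_mod_cast hn0)]
      rw [div_lt_iff₀ hε] at hn
      nlinarith
    calc β * ∫ τ in t0..s, f τ * u τ ≤ (u s - 1) + K / n := claim n hn0
      _ ≤ (u s - 1) + ε := by linarith
  -- now assemble
  have hEeq : ∀ τ' : ℝ, Real.exp (k * ∫ z in τ'..s, ‖c3 z‖) =
      Real.exp (k * F s) * u τ' := by
    intro τ'
    have h1 : (∫ z in τ'..s, ‖c3 z‖) = F s - F τ' := (hFadd τ' s).symm
    rw [h1, ← Real.exp_add]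
    congr 1
    simp only [hβdef]; ring
  have hInteq : (∫ τ' in t0..s, Real.exp (k * ∫ z in τ'..s, ‖c3 z‖) * (‖c3 τ'‖ * h τ')) =
      ∫ τ' in t0..s, (Real.exp (k * F s) * u τ') * (f τ' * h τ') :=
    intervalIntegral.integral_congr (fun τ' _ => by rw [hEeq τ'])
  have hgs : g s = (-k * Real.exp (k * F s)) * ∫ τ' in t0..s, u τ' * (f τ' * h τ') := by
    have hpull1 : (∫ τ' in t0..s, (Real.exp (k * F s) * u τ') * (f τ' * h τ')) =
        ∫ τ' in t0..s, Real.exp (k * F s) * (u τ' * (f τ' * h τ')) :=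
      intervalIntegral.integral_congr (fun x _ => by ring)
    have hpull2 := intervalIntegral.integral_const_mul (μ := volume) (a := t0) (b := s)
      (Real.exp (k * F s)) (fun τ' => u τ' * (f τ' * h τ'))
    rw [hg s, hInteq, hpull1, hpull2, ← hβdef]
    ring
  -- integrability for the comparison step
  have hA'i : IntervalIntegrable (fun τ' => u τ' * (f τ' * h τ')) volume t0 s := by
    refine bdd_ii (hucont.measurable.mul (hfm.mul hhm)) _ _ (u s * (C * C)) ?_
    intro x hx
    have hx' : x ∈ Set.Icc t0 s := by
      rwa [Set.uIcc_of_le hts] at hx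
    show |u x * (f x * h x)| ≤ _
    rw [abs_mul, abs_mul, abs_of_nonneg (hu0 x).le, abs_of_nonneg (hf0 x)]
    exact mul_le_mul (hus x hx') (mul_le_mul (hc3b x) (hhb x) (abs_nonneg _) hC0)
      (mul_nonneg (hf0 x) (abs_nonneg _)) (hu0 s).le
  have hB'i : IntervalIntegrable (fun τ' => f τ' * u τ') volume t0 s :=
    hfui t0 s (Set.left_mem_Icc.2 hts) (Set.right_mem_Icc.2 hts)
  set B' : ℝ := ∫ τ' in t0..s, f τ' * u τ' with hB'def
  have hB'0 : 0 ≤ B' :=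
    intervalIntegral.integral_nonneg hts (fun x _ => mul_nonneg (hf0 x) (hu0 x).le)
  -- comparison: h s * B' ≤ A'
  have hcomp : h s * B' ≤ ∫ τ' in t0..s, u τ' * (f τ' * h τ') := by
    have hsub : (∫ τ' in t0..s, u τ' * (f τ' * h τ')) - h s * B' =
        ∫ τ' in t0..s, (u τ' * (f τ' * h τ') - h s * (f τ' * u τ')) := by
      rw [intervalIntegral.integral_sub hA'i (hB'i.const_mul (h s))]
      simp [hB'def, intervalIntegral.integral_const_mul]
    have hnn : 0 ≤ ∫ τ' in t0..s, (u τ' * (f τ' * h τ') - h s * (f τ' * u τ')) := by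
      apply intervalIntegral.integral_nonneg hts
      intro x hx
      by_cases hcx : c3 x = 0
      · have : f x = 0 := by simp [hfdef, hcx]
        simp [this]
      · have hhx : h s ≤ h x :=
          hmono x ⟨hx.1, le_trans hx.2 hst⟩ s ⟨hts, hst⟩ hcx hcs hx.2
        have : u x * (f x * h x) - h s * (f x * u x) = f x * u x * (h x - h s) := by ring
        rw [this]
        exact mul_nonneg (mul_nonneg (hf0 x) (hu0 x).le) (by linarith)
    linarith
  -- bound on Q := -k * exp(k F s) * B'
  have hexp_pos : (0:ℝ) < Real.exp (k * F s) := Real.exp_pos _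
  have hkFs : k * F s ≤ 0 := mul_nonpos_of_nonpos_of_nonneg hk.le hFs0
  have hexp_le_one : Real.exp (k * F s) ≤ 1 := Real.exp_le_one_iff.2 hkFs
  have hQle : (-k * Real.exp (k * F s)) * B' ≤ 1 - Real.exp (k * F s) := by
    have h1 : Real.exp (k * F s) * (β * B') ≤ Real.exp (k * F s) * (u s - 1) :=
      mul_le_mul_of_nonneg_left key hexp_pos.le
    have h2 : Real.exp (k * F s) * u s = 1 := by
      rw [hudef, ← Real.exp_add]
      simp only [hβdef]
      rw [show k * F s + -k * F s = 0 by ring, Real.exp_zero]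
    have : Real.exp (k * F s) * (u s - 1) = 1 - Real.exp (k * F s) := by
      rw [mul_sub, h2]; ring
    calc (-k * Real.exp (k * F s)) * B' = Real.exp (k * F s) * (β * B') := by
          simp only [hβdef]; ring
      _ ≤ 1 - Real.exp (k * F s) := by rw [this] at h1; exact h1
  have hQ0 : 0 ≤ (-k * Real.exp (k * F s)) * B' :=
    mul_nonneg (mul_nonneg (by linarith) hexp_pos.le) hB'0
  have hhs : h s ≤ 0 := hneg s ⟨hts, hst⟩
  have hFgoal : (∫ z in t0..s, ‖c3 z‖) = F s := rfl
  constructor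
  · rw [hFgoal, hgs]
    calc h s * (1 - Real.exp (k * F s))
        ≤ h s * ((-k * Real.exp (k * F s)) * B') :=
          mul_le_mul_of_nonpos_left hQle hhs
      _ = (-k * Real.exp (k * F s)) * (h s * B') := by ring
      _ ≤ (-k * Real.exp (k * F s)) * ∫ τ' in t0..s, u τ' * (f τ' * h τ') :=
          mul_le_mul_of_nonneg_left hcomp
            (mul_nonneg (by linarith) hexp_pos.le)
  · rw [hFgoal]
    nlinarith [hexp_pos, hexp_le_one]
end

section
/- Let $b: [0,T] \to \mathbb{R}^n$, $\theta_0, \theta_1: [0,T] \to \mathbb{R}^n$ be piecewise continuous with $\theta_1$ bounded. Fix $\tau \in (0,T]$ and $x_0 \in \mathbb{R}$. Then the unique piecewise continuous solution $\theta_0$ of the integral equation $\theta_0(t) = -\theta_1(t)\left(x_0 e^{\int_0^t b(s)^\top \theta_1(s)\,ds} + \int_0^t b(s)^\top \theta_0(s) e^{\int_s^t b(z)^\top \theta_1(z)\,dz}\,ds\right)$, $t \in [0,\tau]$, is $\theta_0(t) = -x_0 \theta_1(t)$. -/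
open MeasureTheory
open scoped RealInnerProductSpace

section Helpers

open Set Filter

lemma exists_piece {N : ℕ} {t : Fin (N+1) → ℝ} (ht : StrictMono t) {a b s : ℝ}
    (h0 : t 0 = a) (hl : t (Fin.last N) = b) (hs : s ∈ Set.Ico a b) :
    ∃ i : Fin N, s ∈ Set.Ico (t i.castSucc) (t i.succ) := by
  classical
  set A : Finset (Fin (N+1)) := Finset.univ.filter (fun j => t j ≤ s) with hA
  have h0A : (0 : Fin (N+1)) ∈ A := by
    simp [hA, h0, hs.1]
  have hAne : A.Nonempty := ⟨0, h0A⟩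
  set i := A.max' hAne with hi
  have hiA : i ∈ A := A.max'_mem hAne
  have hts : t i ≤ s := by simpa [hA] using hiA
  have hilt : i < Fin.last N := by
    rcases lt_or_eq_of_le (Fin.le_last i) with h | h
    · exact h
    · exfalso; rw [h, hl] at hts; exact absurd hs.2 (not_lt.2 hts)
  obtain ⟨i', hi'⟩ : ∃ i' : Fin N, i'.castSucc = i := ⟨⟨i, by simpa [Fin.lt_iff_val_lt_val] using hilt⟩, rfl⟩
  refine ⟨i', ⟨by rwa [hi'], ?_⟩⟩
  by_contra hcon
  push_neg at hcon
  have : i'.succ ∈ A := by simp [hA, hcon]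
  have := A.le_max' _ this
  rw [← hi, ← hi'] at this
  exact absurd (Fin.castSucc_lt_succ (i := i')) (not_lt.2 this)

lemma bound_on_Ico {E : Type*} [NormedAddCommGroup E] {f : ℝ → E} {c d : ℝ}
    (hc : ContinuousOn f (Set.Ico c d)) {L : E}
    (hL : Filter.Tendsto f (nhdsWithin d (Set.Iio d)) (nhds L)) :
    ∃ M, ∀ s ∈ Set.Ico c d, ‖f s‖ ≤ M := by
  rcases le_or_gt d c with h | h
  · exact ⟨0, fun s hs => absurd (hs.1.trans_lt hs.2) (not_lt.2 h)⟩
  · have hev : ∀ᶠ x in nhdsWithin d (Set.Iio d), ‖f x‖ < ‖L‖ + 1 :=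
      (hL.norm).eventually_lt_const (by linarith [norm_nonneg L])
    rw [eventually_iff, mem_nhdsLT_iff_exists_Ioo_subset] at hev
    obtain ⟨l, hl, hsub⟩ := hev
    have hl' : l < d := hl
    set c' := max c l with hc'
    have hc'd : c' < d := max_lt h hl'
    have hsub2 : Set.Icc c c' ⊆ Set.Ico c d := fun x hx => ⟨hx.1, lt_of_le_of_lt hx.2 hc'd⟩
    obtain ⟨M1, hM1⟩ := (isCompact_Icc (a := c) (b := c')).exists_bound_of_continuousOn
      (hc.mono hsub2)
    refine ⟨max M1 (‖L‖ + 1), fun s hs => ?_⟩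
    rcases le_or_gt s c' with h1 | h1
    · exact le_trans (hM1 s ⟨hs.1, h1⟩) (le_max_left _ _)
    · have : s ∈ Set.Ioo l d := ⟨lt_of_le_of_lt (le_max_right c l) h1, hs.2⟩
      exact le_trans (le_of_lt (hsub this)) (le_max_right _ _)

lemma PiecewiseContinuousOn.bound {E : Type*} [NormedAddCommGroup E] {f : ℝ → E} {a b : ℝ}
    (h : PiecewiseContinuousOn f a b) : ∃ M, 0 ≤ M ∧ ∀ s ∈ Set.Ico a b, ‖f s‖ ≤ M := by
  obtain ⟨N, t, ht, h0, hl, hpc⟩ := h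
  have hM : ∀ i : Fin N, ∃ M, ∀ s ∈ Set.Ico (t i.castSucc) (t i.succ), ‖f s‖ ≤ M := by
    intro i
    obtain ⟨hcont, L, hL⟩ := hpc i
    exact bound_on_Ico hcont hL
  choose M hMs using hM
  obtain ⟨M0, hM0⟩ := (Set.finite_range M).bddAbove
  refine ⟨max M0 0, le_max_right _ _, fun s hs => ?_⟩
  obtain ⟨i, hi⟩ := exists_piece ht h0 hl hs
  exact le_trans (hMs i s hi) (le_trans (hM0 ⟨i, rfl⟩) (le_max_left _ _))

lemma PiecewiseContinuousOn.aesm {E : Type*} [NormedAddCommGroup E] {f : ℝ → E} {a b : ℝ}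
    (h : PiecewiseContinuousOn f a b) :
    AEStronglyMeasurable f (volume.restrict (Set.Icc a b)) := by
  obtain ⟨N, t, ht, h0, hl, hpc⟩ := h
  rw [← Measure.restrict_congr_set Ico_ae_eq_Icc]
  have hsub : Set.Ico a b ⊆ ⋃ i : Fin N, Set.Ico (t i.castSucc) (t i.succ) := by
    intro s hs
    obtain ⟨i, hi⟩ := exists_piece ht h0 hl hs
    exact Set.mem_iUnion.2 ⟨i, hi⟩
  have : AEStronglyMeasurable f (volume.restrict (⋃ i : Fin N, Set.Ico (t i.castSucc) (t i.succ))) := by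
    rw [aestronglyMeasurable_iUnion_iff]
    exact fun i => (hpc i).1.aestronglyMeasurable measurableSet_Ico
  exact this.mono_measure (Measure.restrict_mono hsub le_rfl)

lemma PiecewiseContinuousOn.contAt {E : Type*} [TopologicalSpace E] {f : ℝ → E} {a b : ℝ}
    (h : PiecewiseContinuousOn f a b) :
    ∃ S : Set ℝ, S.Countable ∧ ∀ s ∈ Set.Ioo a b, s ∉ S → ContinuousAt f s := by
  obtain ⟨N, t, ht, h0, hl, hpc⟩ := h
  refine ⟨Set.range t, (Set.finite_range t).countable, fun s hs hsS => ?_⟩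
  obtain ⟨i, hi⟩ := exists_piece ht h0 hl ⟨le_of_lt hs.1, hs.2⟩
  have h1 : t i.castSucc < s := lt_of_le_of_ne hi.1 (fun hc => hsS ⟨i.castSucc, hc⟩)
  exact ((hpc i).1 s hi).continuousAt (Ico_mem_nhds h1 hi.2)

lemma ae_bound_mem {E : Type*} [NormedAddCommGroup E] {f : ℝ → E} {T M : ℝ}
    (hM : ∀ s ∈ Set.Ico 0 T, ‖f s‖ ≤ M) {c d : ℝ} (hc : 0 ≤ c) (hd : d ≤ T) :
    ∀ᵐ x : ℝ, x ∈ Set.Ioc c d → ‖f x‖ ≤ M := by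
  have hnull : volume ({x : ℝ | ¬(x ∈ Set.Ioc c d → ‖f x‖ ≤ M)}) = 0 := by
    refine measure_mono_null (t := {T}) ?_ (measure_singleton T)
    intro x hx
    simp only [Set.mem_setOf_eq, _root_.not_imp] at hx
    obtain ⟨hx1, hx2⟩ := hx
    by_contra hxT
    exact hx2 (hM x ⟨le_trans hc (le_of_lt hx1.1), lt_of_le_of_ne (hx1.2.trans hd)
      (by simpa using hxT)⟩)
  exact hnull

lemma ae_bound_Ioc {E : Type*} [NormedAddCommGroup E] {f : ℝ → E} {T M : ℝ}
    (hM : ∀ s ∈ Set.Ico 0 T, ‖f s‖ ≤ M) {c d : ℝ} (hc : 0 ≤ c) (hd : d ≤ T) :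
    ∀ᵐ x ∂(volume.restrict (Set.Ioc c d)), ‖f x‖ ≤ M :=
  (ae_restrict_iff' measurableSet_Ioc).2 (ae_bound_mem hM hc hd)

lemma intInt_of_bound {E : Type*} [NormedAddCommGroup E] {f : ℝ → E} {T M : ℝ}
    (hm : AEStronglyMeasurable f (volume.restrict (Set.Icc 0 T)))
    (hM : ∀ s ∈ Set.Ico 0 T, ‖f s‖ ≤ M) {c d : ℝ} (hc : 0 ≤ c) (hcd : c ≤ d) (hd : d ≤ T) :
    IntervalIntegrable f volume c d := by
  rw [intervalIntegrable_iff_integrableOn_Ioc_of_le hcd]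
  have hsub : Set.Ioc c d ⊆ Set.Icc 0 T := fun x hx =>
    ⟨le_trans hc (le_of_lt hx.1), hx.2.trans hd⟩
  have hm' : AEStronglyMeasurable f (volume.restrict (Set.Ioc c d)) :=
    hm.mono_measure (Measure.restrict_mono hsub le_rfl)
  refine Integrable.mono' (g := fun _ => M) ?_ hm' (ae_bound_Ioc hM hc hd)
  exact integrable_const M

end Helpers

set_option maxHeartbeats 1000000 in
theorem stmt16 (n : ℕ) (T τ x0 : ℝ) (hT : 0 < T) (hτ : τ ∈ Set.Ioc (0:ℝ) T)
    (b θ0 θ1 : ℝ → EuclideanSpace ℝ (Fin n))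
    (hb : PiecewiseContinuousOn b 0 T) (h0 : PiecewiseContinuousOn θ0 0 T)
    (h1 : PiecewiseContinuousOn θ1 0 T)
    (C : ℝ) (hbd : ∀ s ∈ Set.Icc (0:ℝ) T, ‖θ1 s‖ ≤ C) :
    (∀ t ∈ Set.Icc (0:ℝ) τ,
        θ0 t = -(x0 * Real.exp (∫ s in (0:ℝ)..t, ⟪b s, θ1 s⟫)
          + ∫ s in (0:ℝ)..t, ⟪b s, θ0 s⟫ * Real.exp (∫ z in s..t, ⟪b z, θ1 z⟫)) • θ1 t)
      ↔ ∀ t ∈ Set.Icc (0:ℝ) τ, θ0 t = -x0 • θ1 t := by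
  obtain ⟨hτ0, hτT⟩ := hτ
  have hT0 : (0:ℝ) ≤ T := hT.le
  have hC0 : 0 ≤ C := le_trans (norm_nonneg _) (hbd 0 ⟨le_rfl, hT0⟩)
  obtain ⟨Mb, hMb0, hMb⟩ := hb.bound
  obtain ⟨M0, hM00, hM0⟩ := h0.bound
  have hbm := hb.aesm
  have h0m := h0.aesm
  have h1m := h1.aesm
  set f : ℝ → ℝ := fun s => ⟪b s, θ1 s⟫ with hfdef
  set g0 : ℝ → ℝ := fun s => ⟪b s, θ0 s⟫ with hg0def
  have hfm : AEStronglyMeasurable f (volume.restrict (Set.Icc 0 T)) := hbm.inner h1m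
  have hg0m : AEStronglyMeasurable g0 (volume.restrict (Set.Icc 0 T)) := hbm.inner h0m
  have hfbd : ∀ s ∈ Set.Ico (0:ℝ) T, ‖f s‖ ≤ Mb * C := by
    intro s hs
    rw [Real.norm_eq_abs]
    exact le_trans (abs_real_inner_le_norm _ _)
      (mul_le_mul (hMb s hs) (hbd s ⟨hs.1, hs.2.le⟩) (norm_nonneg _) hMb0)
  have hg0bd : ∀ s ∈ Set.Ico (0:ℝ) T, ‖g0 s‖ ≤ Mb * M0 := by
    intro s hs
    rw [Real.norm_eq_abs]
    exact le_trans (abs_real_inner_le_norm _ _)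
      (mul_le_mul (hMb s hs) (hM0 s hs) (norm_nonneg _) hMb0)
  have hfint : ∀ c d : ℝ, 0 ≤ c → c ≤ d → d ≤ T → IntervalIntegrable f volume c d :=
    fun c d hc hcd hd => intInt_of_bound hfm hfbd hc hcd hd
  set F : ℝ → ℝ := fun u => ∫ x in (0:ℝ)..u, f x with hFdef
  have hFc : ContinuousOn F (Set.Icc 0 T) := by
    have := intervalIntegral.continuousOn_primitive_interval'
      (hfint 0 T le_rfl hT0 le_rfl) Set.left_mem_uIcc
    rwa [Set.uIcc_of_le hT0] at this
  have hFbd : ∀ s ∈ Set.Icc (0:ℝ) T, |F s| ≤ Mb * C * T := by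
    intro s hs
    have h1' : ∀ᵐ x : ℝ, x ∈ Set.uIoc 0 s → ‖f x‖ ≤ Mb * C := by
      rw [Set.uIoc_of_le hs.1]
      exact ae_bound_mem hfbd le_rfl hs.2
    have h2 := intervalIntegral.norm_integral_le_of_norm_le_const_ae h1'
    calc |F s| ≤ Mb * C * |s - 0| := h2
    _ ≤ Mb * C * T := by
        rw [sub_zero, abs_of_nonneg hs.1]
        exact mul_le_mul_of_nonneg_left hs.2 (mul_nonneg hMb0 hC0)
  obtain ⟨Sb, hSbc, hSb⟩ := hb.contAt
  obtain ⟨S1, hS1c, hS1⟩ := h1.contAt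
  have hfca : ∀ x ∈ Set.Ioo (0:ℝ) T, x ∉ Sb ∪ S1 → ContinuousAt f x := fun x hx hxS =>
    ContinuousAt.inner (hSb x hx (fun h => hxS (Or.inl h))) (hS1 x hx (fun h => hxS (Or.inr h)))
  have hexp_bd : ∀ r : ℝ, |r| ≤ Mb * C * T → ∀ s ∈ Set.Icc (0:ℝ) T,
      Real.exp (r - F s) ≤ Real.exp (2 * (Mb * C * T)) := by
    intro r hr s hs
    apply Real.exp_le_exp.2
    have h1' := hFbd s hs
    have := abs_le.1 hr
    have := abs_le.1 h1'
    linarith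
  have hprod_int : ∀ (φ : ℝ → ℝ) (Mφ r : ℝ),
      AEStronglyMeasurable φ (volume.restrict (Set.Icc 0 T)) →
      (∀ s ∈ Set.Ico (0:ℝ) T, ‖φ s‖ ≤ Mφ) → |r| ≤ Mb * C * T →
      ∀ c d : ℝ, 0 ≤ c → c ≤ d → d ≤ T →
      IntervalIntegrable (fun s => φ s * Real.exp (r - F s)) volume c d := by
    intro φ Mφ r hφm hφbd hr c d hc hcd hd
    have hMφ0 : 0 ≤ Mφ := le_trans (norm_nonneg _) (hφbd 0 ⟨le_rfl, hT⟩)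
    apply intInt_of_bound (M := Mφ * Real.exp (2 * (Mb * C * T))) ?_ ?_ hc hcd hd
    · exact hφm.mul ((Real.continuous_exp.comp_continuousOn
        ((continuousOn_const).sub hFc)).aestronglyMeasurable measurableSet_Icc)
    · intro s hs
      rw [norm_mul]
      exact mul_le_mul (hφbd s hs)
        (by rw [Real.norm_eq_abs, abs_of_pos (Real.exp_pos _)]
            exact hexp_bd r hr s ⟨hs.1, hs.2.le⟩)
        (norm_nonneg _) hMφ0
  have hkey : ∀ t ∈ Set.Icc (0:ℝ) τ,
      (∫ s in (0:ℝ)..t, f s * Real.exp (F t - F s)) = Real.exp (F t) - 1 := by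
    intro t ht
    have ht0 : (0:ℝ) ≤ t := ht.1
    have htT : t ≤ T := ht.2.trans hτT
    have e1 : ∀ s, f s * Real.exp (F t - F s)
        = Real.exp (F t) * (f s * Real.exp (0 - F s)) := by
      intro s
      rw [sub_eq_add_neg, Real.exp_add, zero_sub]
      ring
    rw [intervalIntegral.integral_congr (g := fun s => Real.exp (F t) * (f s * Real.exp (0 - F s)))
      (fun s _ => e1 s), intervalIntegral.integral_const_mul]
    have hint2 : IntervalIntegrable (fun s => f s * Real.exp (0 - F s)) volume 0 t :=
      hprod_int f (Mb * C) 0 hfm hfbd (by simpa using mul_nonneg (mul_nonneg hMb0 hC0) hT0)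
        0 t le_rfl ht0 htT
    have hftc : (∫ s in (0:ℝ)..t, f s * Real.exp (0 - F s))
        = (fun u => -Real.exp (0 - F u)) t - (fun u => -Real.exp (0 - F u)) 0 := by
      apply integral_eq_of_hasDerivAt_off_countable_of_le _ _ ht0 (hSbc.union hS1c)
      · exact ((Real.continuous_exp.comp_continuousOn
          ((continuousOn_const).sub (hFc.mono (Set.Icc_subset_Icc le_rfl htT)))).neg)
      · intro x hx
        obtain ⟨hx1, hx2⟩ := hx
        have hxT : x < T := lt_of_lt_of_le hx1.2 htT
        have hFd : HasDerivAt F (f x) x := by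
          apply intervalIntegral.integral_hasDerivAt_right
            (hfint 0 x le_rfl hx1.1.le hxT.le)
            ⟨Set.Icc 0 T, Icc_mem_nhds hx1.1 hxT, hfm⟩
            (hfca x ⟨hx1.1, hxT⟩ hx2)
        have hd2 := (((hasDerivAt_const x (0:ℝ)).sub hFd).exp).neg
        convert hd2 using 1
        · funext y; simp
        · simp only [Pi.sub_apply]; ring
      · exact hint2
    rw [hftc]
    have hF0 : F 0 = 0 := intervalIntegral.integral_same
    simp only [hF0, sub_zero, zero_sub, Real.exp_zero]
    rw [Real.exp_neg]
    field_simp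
    ring
  have hcongr0 : ∀ u, u ∈ Set.Icc (0:ℝ) τ →
      (∫ s in (0:ℝ)..u, ⟪b s, θ0 s⟫ * Real.exp (∫ z in s..u, f z))
        = ∫ s in (0:ℝ)..u, g0 s * Real.exp (F u - F s) := by
    intro u hu
    apply intervalIntegral.integral_congr
    intro s hs
    rw [Set.uIcc_of_le hu.1] at hs
    simp only []
    have hsub : (∫ z in s..u, f z) = F u - F s :=
      (intervalIntegral.integral_interval_sub_left
        (hfint 0 u le_rfl hu.1 (hu.2.trans hτT))
        (hfint 0 s le_rfl hs.1 (hs.2.trans (hu.2.trans hτT)))).symm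
    rw [hsub]
  have hmem_ae : ∀ u : ℝ, 0 ≤ u → u ≤ T →
      (∀ᵐ s ∂(volume.restrict (Set.uIoc 0 u)), s ∈ Set.Ico (0:ℝ) T) := by
    intro u hu0 huT
    rw [Set.uIoc_of_le hu0, ae_restrict_iff' measurableSet_Ioc]
    have hnull : volume {x : ℝ | ¬(x ∈ Set.Ioc 0 u → x ∈ Set.Ico (0:ℝ) T)} = 0 := by
      refine measure_mono_null (t := {T}) ?_ (measure_singleton T)
      intro x hx
      simp only [Set.mem_setOf_eq, _root_.not_imp] at hx
      obtain ⟨hx1, hx2⟩ := hx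
      by_contra hxT
      exact hx2 ⟨hx1.1.le, lt_of_le_of_ne (hx1.2.trans huT) (by simpa using hxT)⟩
    exact hnull
  refine ⟨fun heq => ?_, fun hsol => ?_⟩
  · -- forward direction
    have hδbd : ∀ s ∈ Set.Ico (0:ℝ) T, ‖θ0 s + x0 • θ1 s‖ ≤ M0 + |x0| * C := by
      intro s hs
      refine le_trans (norm_add_le _ _) (add_le_add (hM0 s hs) ?_)
      rw [norm_smul, Real.norm_eq_abs]
      exact mul_le_mul_of_nonneg_left (hbd s ⟨hs.1, hs.2.le⟩) (abs_nonneg x0)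
    have hδnint : ∀ c d : ℝ, 0 ≤ c → c ≤ d → d ≤ T →
        IntervalIntegrable (fun s => ‖θ0 s + x0 • θ1 s‖) volume c d := by
      intro c d hc hcd hd
      refine intInt_of_bound (M := M0 + |x0| * C)
        ((h0m.add (h1m.const_smul x0)).norm) ?_ hc hcd hd
      intro s hs
      rw [norm_norm]
      exact hδbd s hs
    have hδeq : ∀ u ∈ Set.Icc (0:ℝ) τ, θ0 u + x0 • θ1 u
        = -(∫ s in (0:ℝ)..u, ⟪b s, θ0 s + x0 • θ1 s⟫ * Real.exp (F u - F s)) • θ1 u := by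
      intro u hu
      have huT : u ≤ T := hu.2.trans hτT
      have h1' := heq u hu
      rw [hcongr0 u hu] at h1'
      have hfint_u : IntervalIntegrable (fun s => f s * Real.exp (F u - F s)) volume 0 u :=
        hprod_int f (Mb*C) (F u) hfm hfbd (hFbd u ⟨hu.1, huT⟩) 0 u le_rfl hu.1 huT
      have hg0int_u : IntervalIntegrable (fun s => g0 s * Real.exp (F u - F s)) volume 0 u :=
        hprod_int g0 (Mb*M0) (F u) hg0m hg0bd (hFbd u ⟨hu.1, huT⟩) 0 u le_rfl hu.1 huT
      have hsplit : (∫ s in (0:ℝ)..u, ⟪b s, θ0 s + x0 • θ1 s⟫ * Real.exp (F u - F s))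
          = (∫ s in (0:ℝ)..u, g0 s * Real.exp (F u - F s)) + x0 * (Real.exp (F u) - 1) := by
        have e2 : ∀ s, ⟪b s, θ0 s + x0 • θ1 s⟫ * Real.exp (F u - F s)
            = g0 s * Real.exp (F u - F s) + x0 * (f s * Real.exp (F u - F s)) := by
          intro s
          simp only [hg0def, hfdef]
          rw [inner_add_right, real_inner_smul_right]
          ring
        rw [intervalIntegral.integral_congr
          (g := fun s => g0 s * Real.exp (F u - F s) + x0 * (f s * Real.exp (F u - F s)))
          (fun s _ => e2 s)]
        rw [intervalIntegral.integral_add hg0int_u (hfint_u.const_mul x0),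
          intervalIntegral.integral_const_mul, hkey u hu]
      rw [hsplit, h1', ← add_smul]
      congr 1
      ring
    set A : ℝ := C * (Mb * Real.exp (2*(Mb*C*T))) with hAdef
    have hA0 : 0 ≤ A := by positivity
    have hkeyineq : ∀ u ∈ Set.Icc (0:ℝ) τ, ‖θ0 u + x0 • θ1 u‖
        ≤ A * (∫ s in (0:ℝ)..u, ‖θ0 s + x0 • θ1 s‖) := by
      intro u hu
      have hu0 := hu.1
      have huT : u ≤ T := hu.2.trans hτT
      have hI0 : (0:ℝ) ≤ ∫ s in (0:ℝ)..u, ‖θ0 s + x0 • θ1 s‖ :=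
        intervalIntegral.integral_nonneg hu0 (fun s _ => norm_nonneg _)
      rw [hδeq u hu, norm_smul, Real.norm_eq_abs, abs_neg]
      have hJ : |∫ s in (0:ℝ)..u, ⟪b s, θ0 s + x0 • θ1 s⟫ * Real.exp (F u - F s)|
          ≤ (Mb * Real.exp (2*(Mb*C*T))) * ∫ s in (0:ℝ)..u, ‖θ0 s + x0 • θ1 s‖ := by
        have hbnd : ∀ᵐ s ∂(volume.restrict (Set.uIoc 0 u)),
            ‖⟪b s, θ0 s + x0 • θ1 s⟫ * Real.exp (F u - F s)‖
              ≤ (Mb * Real.exp (2*(Mb*C*T))) * ‖θ0 s + x0 • θ1 s‖ := by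
          filter_upwards [hmem_ae u hu0 huT] with s hs
          rw [norm_mul]
          have hin : ‖⟪b s, θ0 s + x0 • θ1 s⟫‖ ≤ Mb * ‖θ0 s + x0 • θ1 s‖ := by
            rw [Real.norm_eq_abs]
            exact le_trans (abs_real_inner_le_norm _ _)
              (mul_le_mul_of_nonneg_right (hMb s hs) (norm_nonneg _))
          have hex : ‖Real.exp (F u - F s)‖ ≤ Real.exp (2*(Mb*C*T)) := by
            rw [Real.norm_eq_abs, abs_of_pos (Real.exp_pos _)]
            exact hexp_bd (F u) (hFbd u ⟨hu0, huT⟩) s ⟨hs.1, hs.2.le⟩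
          calc ‖⟪b s, θ0 s + x0 • θ1 s⟫‖ * ‖Real.exp (F u - F s)‖
              ≤ (Mb * ‖θ0 s + x0 • θ1 s‖) * Real.exp (2*(Mb*C*T)) :=
                mul_le_mul hin hex (norm_nonneg _) (mul_nonneg hMb0 (norm_nonneg _))
          _ = (Mb * Real.exp (2*(Mb*C*T))) * ‖θ0 s + x0 • θ1 s‖ := by ring
        have h2 := intervalIntegral.norm_integral_le_abs_of_norm_le hbnd
          ((hδnint 0 u le_rfl hu0 huT).const_mul (Mb * Real.exp (2*(Mb*C*T))))
        rw [intervalIntegral.integral_const_mul, Real.norm_eq_abs] at h2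
        refine le_trans h2 (le_of_eq (abs_of_nonneg ?_))
        exact mul_nonneg (mul_nonneg hMb0 (Real.exp_pos _).le) hI0
      calc |∫ s in (0:ℝ)..u, ⟪b s, θ0 s + x0 • θ1 s⟫ * Real.exp (F u - F s)| * ‖θ1 u‖
          ≤ ((Mb * Real.exp (2*(Mb*C*T))) * ∫ s in (0:ℝ)..u, ‖θ0 s + x0 • θ1 s‖) * C := by
            refine mul_le_mul hJ (hbd u ⟨hu0, huT⟩) (norm_nonneg _) ?_
            exact mul_nonneg (mul_nonneg hMb0 (Real.exp_pos _).le) hI0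
      _ = A * (∫ s in (0:ℝ)..u, ‖θ0 s + x0 • θ1 s‖) := by rw [hAdef]; ring
    set D : ℝ := M0 + |x0| * C with hDdef
    have hD0 : 0 ≤ D := by positivity
    set K0 : ℝ := A * (D * T) with hK0def
    have hK00 : 0 ≤ K0 := by positivity
    have hintD : ∀ u : ℝ, 0 ≤ u → u ≤ T →
        (∫ s in (0:ℝ)..u, ‖θ0 s + x0 • θ1 s‖) ≤ D * u := by
      intro u hu0 huT
      have hae : ∀ᵐ x : ℝ, x ∈ Set.uIoc 0 u → ‖(‖θ0 x + x0 • θ1 x‖)‖ ≤ D := by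
        rw [Set.uIoc_of_le hu0]
        refine (ae_bound_mem (f := fun s => ‖θ0 s + x0 • θ1 s‖) ?_ le_rfl huT)
        intro s hs
        rw [norm_norm]
        exact hδbd s hs
      have h2 := intervalIntegral.norm_integral_le_of_norm_le_const_ae hae
      rw [sub_zero, abs_of_nonneg hu0, Real.norm_eq_abs] at h2
      calc (∫ s in (0:ℝ)..u, ‖θ0 s + x0 • θ1 s‖)
          ≤ |∫ s in (0:ℝ)..u, ‖θ0 s + x0 • θ1 s‖| := le_abs_self _
      _ ≤ D * u := h2
    have hind : ∀ k : ℕ, ∀ u ∈ Set.Icc (0:ℝ) τ,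
        ‖θ0 u + x0 • θ1 u‖ ≤ K0 * (A*u)^k / (k.factorial : ℝ) := by
      intro k
      induction k with
      | zero =>
        intro u hu
        simp only [pow_zero, Nat.factorial_zero, Nat.cast_one, mul_one, div_one]
        have huT : u ≤ T := hu.2.trans hτT
        calc ‖θ0 u + x0 • θ1 u‖ ≤ A * (∫ s in (0:ℝ)..u, ‖θ0 s + x0 • θ1 s‖) := hkeyineq u hu
        _ ≤ A * (D * u) := mul_le_mul_of_nonneg_left (hintD u hu.1 huT) hA0
        _ ≤ K0 := by
              rw [hK0def]
              exact mul_le_mul_of_nonneg_left (mul_le_mul_of_nonneg_left huT hD0) hA0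
      | succ k ih =>
        intro u hu
        have hfact : ((k.factorial : ℝ)) ≠ 0 := Nat.cast_ne_zero.2 k.factorial_ne_zero
        have hpint : (∫ s in (0:ℝ)..u, K0 * (A*s)^k / (k.factorial : ℝ))
            = (K0 * A^k / (k.factorial : ℝ)) * (u^(k+1) / (k+1)) := by
          have e3 : ∀ s : ℝ, K0 * (A*s)^k / (k.factorial : ℝ)
              = (K0 * A^k / (k.factorial : ℝ)) * s^k := by
            intro s; rw [mul_pow]; ring
          rw [intervalIntegral.integral_congr
            (g := fun s => (K0 * A^k / (k.factorial : ℝ)) * s^k) (fun s _ => e3 s),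
            intervalIntegral.integral_const_mul, integral_pow]
          norm_num
        calc ‖θ0 u + x0 • θ1 u‖ ≤ A * (∫ s in (0:ℝ)..u, ‖θ0 s + x0 • θ1 s‖) := hkeyineq u hu
        _ ≤ A * (∫ s in (0:ℝ)..u, K0 * (A*s)^k / (k.factorial : ℝ)) := by
            refine mul_le_mul_of_nonneg_left ?_ hA0
            refine intervalIntegral.integral_mono_on hu.1
              (hδnint 0 u le_rfl hu.1 (hu.2.trans hτT)) ?_ ?_
            · exact ((continuous_const.mul
                ((continuous_const.mul continuous_id).pow k)).div_const _).intervalIntegrable _ _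
            · intro s hs
              exact ih s ⟨hs.1, hs.2.trans hu.2⟩
        _ = K0 * (A*u)^(k+1) / ((k+1).factorial : ℝ) := by
            rw [hpint, mul_pow, Nat.factorial_succ]
            push_cast
            field_simp
            rw [hAdef]; ring
    intro t ht
    have hlim : Filter.Tendsto (fun k : ℕ => K0 * (A*t)^k / (k.factorial : ℝ))
        Filter.atTop (nhds 0) := by
      have h1' := FloorSemiring.tendsto_pow_div_factorial_atTop (K := ℝ) (A*t)
      have h2' := h1'.const_mul K0
      simpa [mul_div_assoc] using h2'
    have hle0 : ‖θ0 t + x0 • θ1 t‖ ≤ 0 :=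
      ge_of_tendsto hlim (Filter.Eventually.of_forall (fun k => hind k t ht))
    have hzero : θ0 t + x0 • θ1 t = 0 := norm_le_zero_iff.1 hle0
    exact (eq_neg_of_add_eq_zero_left hzero).trans (neg_smul x0 (θ1 t)).symm
  · -- backward direction
    intro t ht
    rw [hcongr0 t ht]
    have hgf : ∀ s ∈ Set.Icc (0:ℝ) t, g0 s * Real.exp (F t - F s)
        = (-x0) * (f s * Real.exp (F t - F s)) := by
      intro s hs
      have hθ : θ0 s = -x0 • θ1 s := hsol s ⟨hs.1, hs.2.trans ht.2⟩
      simp only [hg0def, hfdef, hθ, real_inner_smul_right]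
      ring
    rw [intervalIntegral.integral_congr
      (g := fun s => (-x0) * (f s * Real.exp (F t - F s)))
      (fun s hs => hgf s (by rwa [Set.uIcc_of_le ht.1] at hs)),
      intervalIntegral.integral_const_mul, hkey t ht, hsol t ht]
    congr 1
    ring
end
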